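/- arXiv:1401.7114 — 2 statements merged into one kernel-verified Lean document; each statement's English description precedes it below -/
import Mathlib

section
/- Let A and B be n×n Hermitian matrices with eigenvalues in decreasing order λ₁(A) ≥ ⋯ ≥ λₙ(A) and λ₁(B) ≥ ⋯ ≥ λₙ(B), and suppose λₙ(A) + λₙ(B) ≥ 0. Then ∏_{i=1}^{n} (λᵢ(A) + λᵢ(B)) ≤ det(A + B) ≤ ∏_{i=1}^{n} (λᵢ(A) + λ_{n−i+1}(B)). -/
/-!
Write the three Hermitian operators in orthonormal eigenbases with decreasingly ordered
eigenvalues `λ(A)`, `λ(B)`, `μ = λ(A + B)`. Lidskii's inequality says that `μ` is majorized by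
`λ(A) + λ(B)` and, applied to `A = (A + B) + (-B)`, that it majorizes `λ(A) + λ↑(B)`, where
`λ↑(B)` lists the eigenvalues of `B` increasingly. Weyl's inequality turns
`λₙ(A) + λₙ(B) ≥ 0` into `μ ≥ 0`, so all vectors involved are nonnegative, and the product of
the entries of a nonnegative vector can only grow when the vector is replaced by one it
majorizes (by `t ≤ exp (t - 1)` and Abel summation). Lidskii's inequality is proved as in Li–Mathias, from Weyl's inequality and a trace
count.
-/

open Finset Matrix RCLike

theorem Fin.sum_mul_le_mul_sum_of_monotone {R : Type*} [CommRing R] [LinearOrder R]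
    [IsStrictOrderedRing R] {n : ℕ} {g d : Fin n → R} {c : R} (hg : Monotone g)
    (hgc : ∀ i, g i ≤ c) (hd : ∀ i, 0 ≤ ∑ j ∈ Iic i, d j) :
    ∑ i, g i * d i ≤ c * ∑ i, d i := by
  induction n generalizing c with
  | zero => simp
  | succ n ih =>
    have hd' : ∀ i : Fin n, 0 ≤ ∑ j ∈ Iic i, d j.castSucc := fun i => by
      simpa [← Fin.map_castSuccEmb_Iic] using hd i.castSucc
    have htot : 0 ≤ ∑ i, d i := by
      simpa [show Iic (Fin.last n) = univ by ext; simp [Fin.le_last]] using hd (Fin.last n)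
    calc ∑ i, g i * d i
        = ∑ i : Fin n, g i.castSucc * d i.castSucc + g (Fin.last n) * d (Fin.last n) :=
          Fin.sum_univ_castSucc _
      _ ≤ g (Fin.last n) * ∑ i : Fin n, d i.castSucc + g (Fin.last n) * d (Fin.last n) := by
          gcongr
          exact ih (hg.comp Fin.strictMono_castSucc.monotone)
            (fun i => hg (Fin.castSucc_lt_last i).le) hd'
      _ = g (Fin.last n) * ∑ i, d i := by rw [Fin.sum_univ_castSucc, mul_add]
      _ ≤ c * ∑ i, d i := mul_le_mul_of_nonneg_right (hgc _) htot

theorem Fin.prod_le_prod_of_sum_Iic_le {n : ℕ} {x y : Fin n → ℝ} (hx : Antitone x)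
    (hy : ∀ i, 0 ≤ y i) (hpart : ∀ i, ∑ j ∈ Iic i, x j ≤ ∑ j ∈ Iic i, y j)
    (htot : ∑ i, x i = ∑ i, y i) :
    ∏ i, y i ≤ ∏ i, x i := by
  rcases n with _ | n
  · simp
  have hd : ∀ i, 0 ≤ ∑ j ∈ Iic i, (y j - x j) := fun i => by
    rw [sum_sub_distrib]; linarith [hpart i]
  have hdtot : ∑ i, (y i - x i) = 0 := by rw [sum_sub_distrib, htot, sub_self]
  -- Abel's inequality against the indicator of the last index.
  have hlast : y (Fin.last n) ≤ x (Fin.last n) := by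
    have := Fin.sum_mul_le_mul_sum_of_monotone (c := 1) (g := Pi.single (Fin.last n) (1 : ℝ))
      (fun i j hij => by
        rcases eq_or_ne i (Fin.last n) with rfl | hi
        · simp [Fin.last_le_iff.1 hij]
        · simp only [Pi.single_apply, hi, if_false]; split_ifs <;> norm_num)
      (fun i => by simp only [Pi.single_apply]; split_ifs <;> norm_num) hd
    simpa [Pi.single_apply, hdtot] using this
  have hx0 : ∀ i, 0 ≤ x i := fun i => (hy _).trans (hlast.trans (hx (Fin.le_last i)))
  rcases (hx0 (Fin.last n)).eq_or_lt with hzero | hpos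
  · rw [prod_eq_zero (mem_univ _) (le_antisymm (hzero ▸ hlast) (hy _))]
    exact prod_nonneg fun i _ => hx0 i
  have hxpos : ∀ i, 0 < x i := fun i => hpos.trans_le (hx (Fin.le_last i))
  have habel : ∑ i, (x i)⁻¹ * (y i - x i) ≤ 0 := by
    simpa [hdtot] using Fin.sum_mul_le_mul_sum_of_monotone (g := fun i => (x i)⁻¹)
      (fun i j hij => inv_anti₀ (hxpos j) (hx hij))
      (fun i => inv_anti₀ hpos (hx (Fin.le_last i))) hd
  calc ∏ i, y i ≤ ∏ i, x i * Real.exp ((x i)⁻¹ * (y i - x i)) := by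
        refine prod_le_prod (fun i _ => hy i) fun i _ => ?_
        have := Real.add_one_le_exp ((x i)⁻¹ * (y i - x i))
        have h1 : x i * ((x i)⁻¹ * (y i - x i) + 1) = y i := by
          rw [mul_add, ← mul_assoc, mul_inv_cancel₀ (hxpos i).ne']; ring
        nlinarith [hxpos i]
    _ = (∏ i, x i) * Real.exp (∑ i, (x i)⁻¹ * (y i - x i)) := by
        rw [prod_mul_distrib, Real.exp_sum]
    _ ≤ ∏ i, x i :=
        mul_le_of_le_one_right (prod_nonneg fun i _ => hx0 i) (Real.exp_le_one_iff.2 habel)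

theorem Antitone.sum_max_sub_eq_sum_Iic {ι : Type*} [Fintype ι] [LinearOrder ι]
    [LocallyFiniteOrderBot ι] {f : ι → ℝ} (hf : Antitone f) (i : ι) :
    ∑ j, max (f j - f i) 0 = ∑ j ∈ Iic i, (f j - f i) := by
  rw [← sum_subset (subset_univ (Iic i)) fun j _ hj =>
    max_eq_right (sub_nonpos.2 (hf (not_le.1 (by simpa using hj)).le))]
  exact sum_congr rfl fun j hj => max_eq_left (sub_nonneg.2 (hf (mem_Iic.1 hj)))

theorem Fin.exists_perm_antitone {α : Type*} [LinearOrder α] {n : ℕ} (f : Fin n → α) :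
    ∃ σ : Equiv.Perm (Fin n), Antitone (f ∘ σ) :=
  ⟨Tuple.sort (OrderDual.toDual ∘ f), Tuple.monotone_sort (OrderDual.toDual ∘ f)⟩

namespace OrthonormalBasis

variable {𝕜 E ι : Type*} [RCLike 𝕜] [NormedAddCommGroup E] [InnerProductSpace 𝕜 E] [Fintype ι]

section Span

variable (b : OrthonormalBasis ι 𝕜 E)

theorem inner_eq_zero_of_mem_span_image {s : Set ι} {x : E}
    (hx : x ∈ Submodule.span 𝕜 (b '' s)) {j : ι} (hj : j ∉ s) : inner 𝕜 (b j) x = 0 := by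
  refine Submodule.mem_orthogonal_singleton_iff_inner_right.1 (Submodule.span_le.2 ?_ hx)
  rintro _ ⟨k, hk, rfl⟩
  exact Submodule.mem_orthogonal_singleton_iff_inner_right.2
    (b.orthonormal.inner_eq_zero fun h => hj (h ▸ hk))

theorem finrank_span_image (s : Finset ι) :
    Module.finrank 𝕜 (Submodule.span 𝕜 (b '' s)) = #s := by
  rw [Set.image_eq_range]
  exact (finrank_span_eq_card
    (b.orthonormal.linearIndependent.comp ((↑) : s → ι) Subtype.val_injective)).trans (by simp)

theorem exists_ne_zero_mem_span_image_inf (c : OrthonormalBasis ι 𝕜 E) {s t : Finset ι}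
    (hst : Fintype.card ι < #s + #t) :
    ∃ x ≠ 0, x ∈ Submodule.span 𝕜 (b '' s) ∧ x ∈ Submodule.span 𝕜 (c '' t) := by
  have := b.toBasis.finiteDimensional_of_finite
  by_contra! h
  have hdisj : Disjoint (Submodule.span 𝕜 (b '' s)) (Submodule.span 𝕜 (c '' t)) :=
    Submodule.disjoint_def.2 fun x hxb hxc => by_contra fun hx => h x hx hxb hxc
  have := Submodule.finrank_add_finrank_le_of_disjoint hdisj
  rw [b.finrank_span_image, c.finrank_span_image, Module.finrank_eq_card_basis b.toBasis] at this
  omega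

end Span

variable [DecidableEq ι]

noncomputable def diagOp (b : OrthonormalBasis ι 𝕜 E) (lam : ι → ℝ) : E →ₗ[𝕜] E :=
  toLin b.toBasis b.toBasis (diagonal fun i => (lam i : 𝕜))

section DiagOp

variable (b : OrthonormalBasis ι 𝕜 E) (lam : ι → ℝ)

theorem toMatrix_diagOp :
    LinearMap.toMatrix b.toBasis b.toBasis (b.diagOp lam) = diagonal fun i => (lam i : 𝕜) :=
  LinearMap.toMatrix_toLin _ _ _

@[simp]
theorem diagOp_apply_self (i : ι) : b.diagOp lam (b i) = (lam i : 𝕜) • b i := by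
  simpa [diagOp, diagonal_apply] using
    toLin_self b.toBasis b.toBasis (diagonal fun i => (lam i : 𝕜)) i

theorem isSymmetric_diagOp : (b.diagOp lam).IsSymmetric :=
  (isSymmetric_toLin_iff b).2 <| isHermitian_diagonal_iff.2 fun i => by simp [IsSelfAdjoint]

theorem det_diagOp : LinearMap.det (b.diagOp lam) = ∏ i, (lam i : 𝕜) := by
  rw [diagOp, LinearMap.det_toLin, det_diagonal]

theorem trace_diagOp : LinearMap.trace 𝕜 E (b.diagOp lam) = ∑ i, (lam i : 𝕜) := by
  rw [LinearMap.trace_eq_matrix_trace 𝕜 b.toBasis, toMatrix_diagOp, trace_diagonal]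

theorem diagOp_neg : b.diagOp (-lam) = -b.diagOp lam := by
  simp [diagOp, ← map_neg]

theorem diagOp_reindex {ι' : Type*} [Fintype ι'] [DecidableEq ι'] (e : ι ≃ ι') (lam : ι' → ℝ) :
    (b.reindex e).diagOp lam = b.diagOp (lam ∘ e) :=
  b.toBasis.ext fun i => by simpa using (b.reindex e).diagOp_apply_self lam (e i)

theorem re_inner_diagOp_apply (x : E) :
    re (inner 𝕜 x (b.diagOp lam x)) = ∑ i, lam i * ‖inner 𝕜 (b i) x‖ ^ 2 := by
  have hx : b.diagOp lam x = ∑ i, ((lam i : 𝕜) * inner 𝕜 (b i) x) • b i := by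
    conv_lhs => rw [← b.sum_repr' x]
    simp [map_sum, smul_smul, mul_comm]
  rw [hx, inner_sum, map_sum]
  refine sum_congr rfl fun i _ => ?_
  rw [inner_smul_right, ← inner_conj_symm, mul_assoc, RCLike.conj_mul]
  norm_cast
  rw [RCLike.norm_conj]

variable {b lam}

theorem mul_norm_sq_le_re_inner_diagOp {x : E} {c : ℝ}
    (h : ∀ i, inner 𝕜 (b i) x ≠ 0 → c ≤ lam i) :
    c * ‖x‖ ^ 2 ≤ re (inner 𝕜 x (b.diagOp lam x)) := by
  rw [re_inner_diagOp_apply, ← b.sum_sq_norm_inner_right x, mul_sum]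
  refine sum_le_sum fun i _ => ?_
  by_cases hi : inner 𝕜 (b i) x = 0
  · simp [hi]
  · exact mul_le_mul_of_nonneg_right (h i hi) (sq_nonneg _)

theorem re_inner_diagOp_le_mul_norm_sq {x : E} {c : ℝ}
    (h : ∀ i, inner 𝕜 (b i) x ≠ 0 → lam i ≤ c) :
    re (inner 𝕜 x (b.diagOp lam x)) ≤ c * ‖x‖ ^ 2 := by
  rw [re_inner_diagOp_apply, ← b.sum_sq_norm_inner_right x, mul_sum]
  refine sum_le_sum fun i _ => ?_
  by_cases hi : inner 𝕜 (b i) x = 0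
  · simp [hi]
  · exact mul_le_mul_of_nonneg_right (h i hi) (sq_nonneg _)

theorem re_inner_diagOp_le_add {ν : ι → ℝ} {t : ℝ} (h : ∀ i, lam i ≤ ν i + t) (x : E) :
    re (inner 𝕜 x (b.diagOp lam x)) ≤ re (inner 𝕜 x (b.diagOp ν x)) + t * ‖x‖ ^ 2 := by
  rw [re_inner_diagOp_apply, re_inner_diagOp_apply, ← b.sum_sq_norm_inner_right x, mul_sum,
    ← sum_add_distrib]
  exact sum_le_sum fun i _ => by nlinarith [h i, sq_nonneg ‖inner 𝕜 (b i) x‖]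

theorem sum_eq_sum_add_sum_of_diagOp_add_eq {c d : OrthonormalBasis ι 𝕜 E} {ν μ : ι → ℝ}
    (h : b.diagOp lam + c.diagOp ν = d.diagOp μ) : ∑ i, μ i = ∑ i, lam i + ∑ i, ν i := by
  have := congrArg (LinearMap.trace 𝕜 E) h
  rw [map_add, trace_diagOp, trace_diagOp, trace_diagOp] at this
  exact_mod_cast this.symm

end DiagOp

end OrthonormalBasis

theorem LinearMap.IsSymmetric.eq_diagOp_eigenvectorBasis {𝕜 E : Type*} [RCLike 𝕜]
    [NormedAddCommGroup E] [InnerProductSpace 𝕜 E] [FiniteDimensional 𝕜 E] {T : E →ₗ[𝕜] E}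
    (hT : T.IsSymmetric) {n : ℕ} (hn : Module.finrank 𝕜 E = n) :
    T = (hT.eigenvectorBasis hn).diagOp (hT.eigenvalues hn) :=
  (LinearMap.toMatrix (hT.eigenvectorBasis hn).toBasis (hT.eigenvectorBasis hn).toBasis).injective
    (by rw [hT.toMatrix_eigenvectorBasis, OrthonormalBasis.toMatrix_diagOp]; rfl)

namespace OrthonormalBasis

variable {𝕜 E : Type*} [RCLike 𝕜] [NormedAddCommGroup E] [InnerProductSpace 𝕜 E] {n : ℕ}

/-- Weyl's monotonicity principle. -/
theorem le_add_of_re_inner_diagOp_le {b c : OrthonormalBasis (Fin n) 𝕜 E} {lam ν : Fin n → ℝ}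
    (hlam : Antitone lam) (hν : Antitone ν) {t : ℝ}
    (h : ∀ x, re (inner 𝕜 x (b.diagOp lam x)) ≤ re (inner 𝕜 x (c.diagOp ν x)) + t * ‖x‖ ^ 2)
    (i : Fin n) : lam i ≤ ν i + t := by
  obtain ⟨x, hx0, hxb, hxc⟩ := b.exists_ne_zero_mem_span_image_inf c (s := Iic i) (t := Ici i)
    (by simp only [Fin.card_Iic, Fin.card_Ici, Fintype.card_fin]; omega)
  have hb : lam i * ‖x‖ ^ 2 ≤ re (inner 𝕜 x (b.diagOp lam x)) :=
    mul_norm_sq_le_re_inner_diagOp fun j hj =>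
      hlam (by simpa using not_imp_comm.1 (b.inner_eq_zero_of_mem_span_image hxb) hj)
  have hc : re (inner 𝕜 x (c.diagOp ν x)) ≤ ν i * ‖x‖ ^ 2 :=
    re_inner_diagOp_le_mul_norm_sq fun j hj =>
      hν (by simpa using not_imp_comm.1 (c.inner_eq_zero_of_mem_span_image hxc) hj)
  have hx : 0 < ‖x‖ ^ 2 := by positivity
  exact le_of_mul_le_mul_right (by linarith [h x]) hx

variable {bA bB bAB : OrthonormalBasis (Fin n) 𝕜 E} {lamA lamB μ : Fin n → ℝ}

theorem add_le_of_diagOp_add_eq (hA : Antitone lamA) (hμ : Antitone μ)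
    (hAB : bA.diagOp lamA + bB.diagOp lamB = bAB.diagOp μ) {c : ℝ} (hc : ∀ j, c ≤ lamB j)
    (i : Fin n) : lamA i + c ≤ μ i := by
  have := le_add_of_re_inner_diagOp_le hA hμ (t := -c) (fun x => by
    rw [← hAB, LinearMap.add_apply, inner_add_right, map_add]
    linarith [mul_norm_sq_le_re_inner_diagOp (b := bB) (x := x) fun j _ => hc j]) i
  linarith

/-- Lidskii's inequality. The proof compares `A + B` with `A + B₊`, where `B₊` is the positive
part of `B - λᵢ(B)`. -/
theorem sum_sub_le_sum_Iic_of_diagOp_add_eq (hA : Antitone lamA) (hB : Antitone lamB)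
    (hμ : Antitone μ) (hAB : bA.diagOp lamA + bB.diagOp lamB = bAB.diagOp μ)
    {S : Finset (Fin n)} {i : Fin n} (hS : #S = i + 1) :
    ∑ k ∈ S, (μ k - lamA k) ≤ ∑ j ∈ Iic i, lamB j := by
  set m : Fin n → ℝ := fun j => max (lamB j - lamB i) 0 with hm
  have hP := (bA.isSymmetric_diagOp lamA).add (bB.isSymmetric_diagOp m)
  have := bA.toBasis.finiteDimensional_of_finite
  have hn : Module.finrank 𝕜 E = n := by simpa using Module.finrank_eq_card_basis bA.toBasis
  have hPeq := hP.eq_diagOp_eigenvectorBasis hn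
  set lamP := hP.eigenvalues hn
  have hμP : ∀ k, μ k ≤ lamP k + lamB i :=
    le_add_of_re_inner_diagOp_le hμ (hP.eigenvalues_antitone hn) fun x => by
      rw [← hAB, ← hPeq, LinearMap.add_apply, LinearMap.add_apply, inner_add_right,
        inner_add_right, map_add, map_add]
      linarith [re_inner_diagOp_le_add (b := bB) (lam := lamB) (ν := m) (t := lamB i)
        (fun j => by linarith [le_max_left (lamB j - lamB i) 0]) x]
  have hAP : ∀ k, lamA k ≤ lamP k := fun k => by
    simpa using add_le_of_diagOp_add_eq hA (hP.eigenvalues_antitone hn) hPeq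
      (fun j => le_max_right _ _) k
  have hmsum : ∑ j, m j = ∑ j ∈ Iic i, lamB j - (i + 1) * lamB i := by
    rw [hm, hB.sum_max_sub_eq_sum_Iic i, sum_sub_distrib, sum_const, Fin.card_Iic]
    simp
  calc ∑ k ∈ S, (μ k - lamA k) ≤ ∑ k ∈ S, ((lamP k - lamA k) + lamB i) :=
        sum_le_sum fun k _ => by linarith [hμP k]
    _ = ∑ k ∈ S, (lamP k - lamA k) + (i + 1) * lamB i := by
        rw [sum_add_distrib, sum_const, hS]; simp
    _ ≤ ∑ k, (lamP k - lamA k) + (i + 1) * lamB i :=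
        add_le_add_left (sum_le_sum_of_subset_of_nonneg (subset_univ S) fun k _ _ =>
          sub_nonneg.2 (hAP k)) _
    _ = ∑ j ∈ Iic i, lamB j := by
        rw [sum_sub_distrib, sum_eq_sum_add_sum_of_diagOp_add_eq hPeq, hmsum]; ring

theorem prod_add_le_prod_of_diagOp_add_eq (hA : Antitone lamA) (hB : Antitone lamB)
    (hμ : Antitone μ) (hAB : bA.diagOp lamA + bB.diagOp lamB = bAB.diagOp μ)
    (hAB0 : ∀ i, 0 ≤ lamA i + lamB i) :
    ∏ i, (lamA i + lamB i) ≤ ∏ i, μ i := by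
  refine Fin.prod_le_prod_of_sum_Iic_le hμ hAB0 (fun i => ?_)
    ((sum_eq_sum_add_sum_of_diagOp_add_eq hAB).trans sum_add_distrib.symm)
  have := sum_sub_le_sum_Iic_of_diagOp_add_eq hA hB hμ hAB (S := Iic i) (i := i) (by simp)
  rw [sum_sub_distrib] at this
  rw [sum_add_distrib]
  linarith

theorem prod_le_prod_add_rev_of_diagOp_add_eq (hA : Antitone lamA) (hB : Antitone lamB)
    (hμ : Antitone μ) (hAB : bA.diagOp lamA + bB.diagOp lamB = bAB.diagOp μ)
    (hμ0 : ∀ i, 0 ≤ μ i) :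
    ∏ i, μ i ≤ ∏ i, (lamA i + lamB i.rev) := by
  obtain ⟨σ, hσ⟩ := Fin.exists_perm_antitone fun i => lamA i + lamB i.rev
  have hnegB : (bB.reindex Fin.revPerm).diagOp (fun k => -lamB k.rev) + bAB.diagOp μ =
      bA.diagOp lamA := by
    have : (fun k : Fin n => -lamB k.rev) ∘ Fin.revPerm = -lamB := by ext; simp
    rw [diagOp_reindex, this, diagOp_neg, ← hAB]
    abel
  have hpart : ∀ i, ∑ j ∈ Iic i, (lamA (σ j) + lamB (σ j).rev) ≤ ∑ j ∈ Iic i, μ j := fun i => by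
    simpa using sum_sub_le_sum_Iic_of_diagOp_add_eq
      (fun j k h => neg_le_neg (hB (Fin.rev_le_rev.2 h))) hμ hA hnegB
      (S := (Iic i).map σ.toEmbedding) (i := i) (by simp)
  have htot : ∑ i, (lamA (σ i) + lamB (σ i).rev) = ∑ i, μ i := by
    rw [Equiv.sum_comp σ (fun i => lamA i + lamB i.rev), sum_add_distrib,
      sum_eq_sum_add_sum_of_diagOp_add_eq hAB]
    simpa using Equiv.sum_comp Fin.revPerm lamB
  calc ∏ i, μ i ≤ ∏ i, (lamA (σ i) + lamB (σ i).rev) :=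
        Fin.prod_le_prod_of_sum_Iic_le hσ hμ0 hpart htot
    _ = ∏ i, (lamA i + lamB i.rev) := Equiv.prod_comp σ (fun i => lamA i + lamB i.rev)

end OrthonormalBasis

section Matrix

variable {𝕜 n : Type*} [RCLike 𝕜] [Fintype n] [DecidableEq n]

theorem Matrix.det_toEuclideanLin (A : Matrix n n 𝕜) :
    LinearMap.det (toEuclideanLin A) = A.det :=
  LinearMap.det_toLin (PiLp.basisFun 2 𝕜 n) A

theorem Matrix.IsHermitian.toEuclideanLin_eq_diagOp {A : Matrix n n 𝕜} (hA : A.IsHermitian) :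
    toEuclideanLin A = hA.eigenvectorBasis.diagOp hA.eigenvalues :=
  hA.eigenvectorBasis.toBasis.ext fun i => by
    ext1
    simp [toLpLin_apply, hA.mulVec_eigenvectorBasis]

theorem Matrix.IsHermitian.exists_toEuclideanLin_eq_diagOp {A : Matrix n n 𝕜}
    (hA : A.IsHermitian) {lam : n → ℝ} (hlam : ∃ e : Equiv.Perm n, lam = hA.eigenvalues ∘ e) :
    ∃ b : OrthonormalBasis n 𝕜 (EuclideanSpace 𝕜 n), toEuclideanLin A = b.diagOp lam := by
  obtain ⟨e, rfl⟩ := hlam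
  refine ⟨hA.eigenvectorBasis.reindex e.symm, ?_⟩
  rw [OrthonormalBasis.diagOp_reindex, hA.toEuclideanLin_eq_diagOp]
  congr 1
  ext i
  simp

end Matrix

/-- Ordered case of Fiedler's inequality: if `lamA`, `lamB` enumerate the eigenvalues of
Hermitian matrices `A`, `B` in decreasing order and `λₙ(A) + λₙ(B) ≥ 0`, then
`∏ᵢ (λᵢ(A) + λᵢ(B)) ≤ det(A+B) ≤ ∏ᵢ (λᵢ(A) + λ_{n−i+1}(B))`. -/
theorem fiedler_det_add_ordered {n : ℕ} (hn : 0 < n) (A B : Matrix (Fin n) (Fin n) ℂ)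
    (hA : A.IsHermitian) (hB : B.IsHermitian)
    (lamA lamB : Fin n → ℝ)
    (hlamA : ∃ e : Equiv.Perm (Fin n), lamA = hA.eigenvalues ∘ e)
    (hlamB : ∃ e : Equiv.Perm (Fin n), lamB = hB.eigenvalues ∘ e)
    (hA_anti : Antitone lamA) (hB_anti : Antitone lamB)
    (hlast : 0 ≤ lamA ⟨n - 1, by omega⟩ + lamB ⟨n - 1, by omega⟩) :
    (∏ i, (lamA i + lamB i)) ≤ (A + B).det.re ∧
    (A + B).det.re ≤ ∏ i, (lamA i + lamB i.rev) := by
  obtain ⟨bA, hbA⟩ := hA.exists_toEuclideanLin_eq_diagOp hlamA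
  obtain ⟨bB, hbB⟩ := hB.exists_toEuclideanLin_eq_diagOp hlamB
  have hS := isSymmetric_toEuclideanLin_iff.2 (hA.add hB)
  have hSeq := hS.eq_diagOp_eigenvectorBasis finrank_euclideanSpace_fin
  have hμ := hS.eigenvalues_antitone finrank_euclideanSpace_fin
  have hAB := (map_add toEuclideanLin A B).symm.trans hSeq
  rw [hbA, hbB] at hAB
  have hdet : (A + B).det.re = ∏ i, hS.eigenvalues finrank_euclideanSpace_fin i := by
    rw [← det_toEuclideanLin, congrArg LinearMap.det hSeq, OrthonormalBasis.det_diagOp]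
    norm_cast
  have hle_last : ∀ i : Fin n, i ≤ ⟨n - 1, by omega⟩ := fun i =>
    Fin.le_def.2 (Nat.le_sub_one_of_lt i.isLt)
  rw [hdet]
  refine ⟨OrthonormalBasis.prod_add_le_prod_of_diagOp_add_eq hA_anti hB_anti hμ hAB fun i => ?_,
    OrthonormalBasis.prod_le_prod_add_rev_of_diagOp_add_eq hA_anti hB_anti hμ hAB fun i => ?_⟩
  · linarith [hA_anti (hle_last i), hB_anti (hle_last i)]
  · linarith [hA_anti (hle_last i), OrthonormalBasis.add_le_of_diagOp_add_eq hA_anti hμ hAB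
      (fun j => hB_anti (hle_last j)) i]
end

section
/- For fixed η > 1, as m → ∞ with n = ⌈η·m⌉: (1/m)·Σ_{ℓ=0}^{m−1} ψ(n−ℓ) = (η−1)·ln(η/(η−1)) + ln(n) − 1 + O(1/m), where ψ(k) = −γ + Σ_{j=1}^{k−1} 1/j. -/
/-!
Writing `ψ k = H_{k-1} - γ` and using `∑_{k<K} H_k = K H_K - K`, the sum telescopes to
`n H_n - b H_b - m - m γ` with `b = n - m`. Since `H_k = log k + γ + ρ_k / k` with `ρ_k ∈ [0, 1]`,
the average equals `log n - 1 + t log ((t + 1) / t) + O(1/m)` for `t = b / m`. Finally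
`t ∈ [η - 1, η - 1 + 1/m]`, and `x ↦ x log ((x + 1) / x)` is `1/(η - 1)`-Lipschitz on `[η - 1, ∞)`.
-/

open Finset Real

lemma sum_range_harmonic (K : ℕ) :
    ∑ k ∈ range K, harmonic k = K * harmonic K - K := by
  induction K with
  | zero => simp
  | succ K ih =>
    rw [sum_range_succ, ih, harmonic_succ]
    push_cast
    field_simp
    ring

lemma sum_range_harmonic_add (b m : ℕ) :
    ∑ i ∈ range m, (harmonic (b + i) : ℝ) = (b + m) * harmonic (b + m) - b * harmonic b - m := by
  have h := sum_range_add harmonic b m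
  rw [sum_range_harmonic, sum_range_harmonic] at h
  exact_mod_cast (by push_cast at h ⊢; linarith : _)

lemma mul_harmonic_sub_log_sub_eulerMascheroniConstant_mem_Icc {k : ℕ} (hk : k ≠ 0) :
    k * ((harmonic k : ℝ) - log k - eulerMascheroniConstant) ∈ Set.Icc 0 1 := by
  have hk0 : (0 : ℝ) < k := by positivity
  have hlower := eulerMascheroniConstant_lt_eulerMascheroniSeq' k
  have hupper := eulerMascheroniSeq_lt_eulerMascheroniConstant k
  rw [eulerMascheroniSeq', if_neg hk] at hlower
  rw [eulerMascheroniSeq] at hupper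
  have hlog : log (k + 1) - log k ≤ 1 / k := by
    rw [← log_div (by positivity) hk0.ne']
    calc log ((k + 1) / k) ≤ (k + 1) / k - 1 := log_le_sub_one_of_pos (by positivity)
      _ = 1 / k := by field_simp; ring
  constructor
  · exact mul_nonneg hk0.le (by linarith)
  · calc (k : ℝ) * ((harmonic k : ℝ) - log k - eulerMascheroniConstant) ≤ k * (1 / k) := by
          gcongr; linarith
      _ = 1 := by field_simp

lemma abs_mul_log_add_one_div_sub_le {u t : ℝ} (hu : 0 < u) (hut : u ≤ t) :
    |t * log ((t + 1) / t) - u * log ((u + 1) / u)| ≤ (t - u) / u := by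
  have ht : 0 < t := hu.trans_le hut
  set A := (t + 1) / t with hA
  set B := (u + 1) / u with hB
  have hA1 : 1 ≤ A := by rw [hA, le_div_iff₀ ht]; linarith
  have hAB : A ≤ B := by rw [hA, hB, div_le_div_iff₀ ht hu]; linarith
  have hlogA : log A ≤ 1 / t := by
    calc log A ≤ A - 1 := log_le_sub_one_of_pos (by positivity)
      _ = 1 / t := by rw [hA]; field_simp; ring
  have hlogAB : (u - t) / (u * (t + 1)) ≤ log A - log B := by
    calc (u - t) / (u * (t + 1)) = 1 - (A / B)⁻¹ := by rw [hA, hB]; field_simp; ring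
      _ ≤ log (A / B) := one_sub_inv_le_log_of_pos (by positivity)
      _ = log A - log B := log_div (by positivity) (by positivity)
  have hsplit : t * log A - u * log B = (t - u) * log A + u * (log A - log B) := by ring
  have hshift_le : (t - u) * log A ≤ (t - u) / u := by
    calc (t - u) * log A ≤ (t - u) * (1 / t) := by gcongr
      _ ≤ (t - u) / u := by rw [mul_one_div]; gcongr
  have hlog_diff_ge : -((t - u) / u) ≤ u * (log A - log B) := by
    calc -((t - u) / u) ≤ -((t - u) / (t + 1)) := by gcongr; linarith
      _ = u * ((u - t) / (u * (t + 1))) := by field_simp; ring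
      _ ≤ u * (log A - log B) := by gcongr
  rw [hsplit, abs_le]
  constructor
  · linarith [mul_nonneg (sub_nonneg.2 hut) (log_nonneg hA1)]
  · linarith [mul_nonpos_of_nonneg_of_nonpos hu.le (sub_nonpos.2 (log_le_log (by positivity) hAB))]

lemma sum_range_harmonic_sub_sub_one {b m n : ℕ} (hn : b + m = n) :
    ∑ ℓ ∈ range m, (harmonic (n - ℓ - 1) : ℝ) = n * harmonic n - b * harmonic b - m := by
  subst hn
  push_cast
  rw [← sum_range_harmonic_add, ← sum_range_reflect]
  refine sum_congr rfl fun ℓ hℓ => ?_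
  rw [mem_range] at hℓ
  congr 2
  omega

lemma abs_average_sum_harmonic_sub_le {b m n : ℕ} (hb : b ≠ 0) (hm : m ≠ 0) (hn : b + m = n) :
    |(1 / (m : ℝ)) * ∑ ℓ ∈ range m, ((harmonic (n - ℓ - 1) : ℝ) - eulerMascheroniConstant)
      - ((b / m : ℝ) * log ((b / m + 1) / (b / m)) + log n - 1)| ≤ 1 / m := by
  set γ := eulerMascheroniConstant
  have hnR : (n : ℝ) = b + m := by exact_mod_cast hn.symm
  have hbR : (0 : ℝ) < b := by positivity
  have hmR : (0 : ℝ) < m := by positivity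
  have hsum : ∑ ℓ ∈ range m, ((harmonic (n - ℓ - 1) : ℝ) - γ)
      = n * harmonic n - b * harmonic b - m - m * γ := by
    rw [sum_sub_distrib, sum_range_harmonic_sub_sub_one hn, sum_const, card_range, nsmul_eq_mul]
  have hlog : log ((b / m + 1) / (b / m) : ℝ) = log n - log b := by
    rw [← log_div (by rw [hnR]; positivity) hbR.ne', hnR]
    congr 1
    field_simp
  obtain ⟨hρn₀, hρn₁⟩ := mul_harmonic_sub_log_sub_eulerMascheroniConstant_mem_Icc (k := n) (by omega)
  obtain ⟨hρb₀, hρb₁⟩ := mul_harmonic_sub_log_sub_eulerMascheroniConstant_mem_Icc hb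
  rw [hsum, hlog]
  calc _ = |(n * ((harmonic n : ℝ) - log n - γ) - b * ((harmonic b : ℝ) - log b - γ)) / m| := by
        congr 1; rw [hnR]; field_simp; ring
    _ ≤ 1 / m := by
        rw [abs_div, abs_of_pos hmR]
        exact div_le_div_of_nonneg_right (abs_le.2 ⟨by linarith, by linarith⟩) hmR.le

/-- Lemma 2 of the paper: for fixed `η > 1` and `n = ⌈η·m⌉`,
`(1/m)·Σ_{ℓ=0}^{m−1} ψ(n−ℓ) = (η−1)·ln(η/(η−1)) + ln n − 1 + O(1/m)` as `m → ∞`,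
where `ψ(k) = −γ + Σ_{j=1}^{k−1} 1/j`. -/
theorem wishart_logdet_asymptotic (ψ : ℕ → ℝ)
    (hψ : ∀ k : ℕ, ψ k = -Real.eulerMascheroniConstant + ∑ j ∈ Finset.Icc 1 (k - 1), (1 : ℝ) / j)
    (η : ℝ) (hη : 1 < η) :
    ∃ C : ℝ, 0 < C ∧ ∃ N : ℕ, ∀ m : ℕ, N ≤ m →
      |(1 / (m : ℝ)) * ∑ ℓ ∈ Finset.range m, ψ (⌈η * m⌉₊ - ℓ)
        - ((η - 1) * Real.log (η / (η - 1)) + Real.log (⌈η * m⌉₊) - 1)| ≤ C / m := by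
  have hη₁ : 0 < η - 1 := by linarith
  refine ⟨1 / (η - 1) + 1, by positivity, 1, fun m hm => ?_⟩
  have hmR : (0 : ℝ) < m := by exact_mod_cast hm
  set n := ⌈η * m⌉₊
  have hmn : m < n := Nat.lt_ceil.2 (by nlinarith)
  set b := n - m
  have hbmn : b + m = n := by omega
  have hbR : (b : ℝ) = n - m := by rw [← hbmn]; push_cast; ring
  have hψ_harmonic (k : ℕ) : ψ k = harmonic (k - 1) - eulerMascheroniConstant := by
    rw [hψ, harmonic_eq_sum_Icc]
    push_cast
    simp only [one_div]
    ring
  have ht_lower : η - 1 ≤ b / m := by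
    rw [le_div_iff₀ hmR, hbR]
    linarith [Nat.le_ceil (η * m)]
  have ht_upper : (b / m : ℝ) - (η - 1) ≤ 1 / m := by
    rw [div_sub' hmR.ne', div_le_div_iff_of_pos_right hmR, hbR]
    linarith [Nat.ceil_lt_add_one (by positivity : 0 ≤ η * m)]
  have hwindow := abs_average_sum_harmonic_sub_le (by omega) (by omega) hbmn
  have hshape := abs_mul_log_add_one_div_sub_le hη₁ ht_lower
  rw [sub_add_cancel] at hshape
  have hshape_le : ((b / m : ℝ) - (η - 1)) / (η - 1) ≤ 1 / m / (η - 1) := by gcongr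
  have hC : 1 / m + 1 / m / (η - 1) = (1 / (η - 1) + 1) / m := by field_simp; ring
  simp only [hψ_harmonic]
  rw [abs_le] at hwindow hshape ⊢
  constructor <;> linarith [hwindow.1, hwindow.2, hshape.1, hshape.2]
end
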